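/- Let P_1, ..., P_n be pairwise commuting contractions on a complex Hilbert space H. Then the product P_1 P_2 ⋯ P_n is unitary if and only if each P_i is unitary. -/

import Mathlib

/-!
If `A` and `B` are commuting contractions with `A * B` unitary, then
`‖x‖ = ‖A (B x)‖ ≤ ‖B x‖ ≤ ‖x‖`, so `B` is an isometry, and `B` is onto because `B * A = A * B`
is; an isometry onto `H` is unitary, and `A` is unitary by symmetry. For `n` factors, induct on
the list: the product of the remaining factors is again a contraction commuting with the first.
-/

namespace ContinuousLinearMap

section Contraction

variable {𝕜 E : Type*} [NontriviallyNormedField 𝕜] [SeminormedAddCommGroup E] [NormedSpace 𝕜 E]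

theorem norm_list_prod_le_one {l : List (E →L[𝕜] E)} (hl : ∀ A ∈ l, ‖A‖ ≤ 1) :
    ‖l.prod‖ ≤ 1 := by
  induction l with
  | nil => exact norm_id_le
  | cons A l ih =>
    rw [List.forall_mem_cons] at hl
    calc ‖A * l.prod‖ ≤ ‖A‖ * ‖l.prod‖ := norm_mul_le _ _
      _ ≤ 1 := mul_le_one₀ hl.1 (norm_nonneg _) (ih hl.2)

end Contraction

variable {𝕜 H : Type*} [RCLike 𝕜] [NormedAddCommGroup H] [InnerProductSpace 𝕜 H]
  [CompleteSpace H]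

theorem mem_unitary_of_norm_map_of_surjective {u : H →L[𝕜] H} (hu : ∀ x, ‖u x‖ = ‖x‖)
    (hsurj : Function.Surjective u) : u ∈ unitary (H →L[𝕜] H) :=
  (Unitary.linearIsometryEquiv.symm
    (LinearIsometryEquiv.ofSurjective ⟨u.toLinearMap, hu⟩ hsurj)).property

theorem norm_map_of_mul_mem_unitary {A B : H →L[𝕜] H} (hA : ‖A‖ ≤ 1) (hB : ‖B‖ ≤ 1)
    (hAB : A * B ∈ unitary (H →L[𝕜] H)) (x : H) : ‖B x‖ = ‖x‖ := by
  refine le_antisymm (by simpa using B.le_of_opNorm_le hB x) ?_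
  calc ‖x‖ = ‖A (B x)‖ := (norm_map_of_mem_unitary hAB x).symm
    _ ≤ ‖B x‖ := by simpa using A.le_of_opNorm_le hA (B x)

theorem mem_unitary_right_of_mul_mem_unitary {A B : H →L[𝕜] H} (hAB_comm : Commute A B)
    (hA : ‖A‖ ≤ 1) (hB : ‖B‖ ≤ 1) (hAB : A * B ∈ unitary (H →L[𝕜] H)) :
    B ∈ unitary (H →L[𝕜] H) := by
  have hBA_surj : Function.Surjective (B ∘ A) := by
    rw [← FunLike.coe_mul_eq_comp, ← hAB_comm.eq]
    exact (Unitary.linearIsometryEquiv ⟨A * B, hAB⟩).surjective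
  exact mem_unitary_of_norm_map_of_surjective (norm_map_of_mul_mem_unitary hA hB hAB)
    hBA_surj.of_comp

theorem mul_mem_unitary_iff_of_commute {A B : H →L[𝕜] H} (hAB_comm : Commute A B)
    (hA : ‖A‖ ≤ 1) (hB : ‖B‖ ≤ 1) :
    A * B ∈ unitary (H →L[𝕜] H) ↔ A ∈ unitary (H →L[𝕜] H) ∧ B ∈ unitary (H →L[𝕜] H) := by
  refine ⟨fun hAB ↦ ⟨?_, mem_unitary_right_of_mul_mem_unitary hAB_comm hA hB hAB⟩,
    fun h ↦ Submonoid.mul_mem _ h.1 h.2⟩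
  exact mem_unitary_right_of_mul_mem_unitary hAB_comm.symm hB hA (hAB_comm.eq ▸ hAB)

theorem list_prod_mem_unitary_iff {l : List (H →L[𝕜] H)} (hcomm : l.Pairwise Commute)
    (hl : ∀ A ∈ l, ‖A‖ ≤ 1) :
    l.prod ∈ unitary (H →L[𝕜] H) ↔ ∀ A ∈ l, A ∈ unitary (H →L[𝕜] H) := by
  induction l with
  | nil => simp
  | cons A l ih =>
    rw [List.pairwise_cons] at hcomm
    rw [List.forall_mem_cons] at hl
    rw [List.prod_cons, List.forall_mem_cons, ← ih hcomm.2 hl.2]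
    exact mul_mem_unitary_iff_of_commute (Commute.list_prod_right _ _ hcomm.1) hl.1
      (norm_list_prod_le_one hl.2)

end ContinuousLinearMap

open ContinuousLinearMap

theorem finite_product_unitary_iff_each_unitary
    {H : Type*} [NormedAddCommGroup H] [InnerProductSpace ℂ H] [CompleteSpace H]
    (n : ℕ) (P : Fin n → (H →L[ℂ] H))
    (hnorm : ∀ i, ‖P i‖ ≤ 1)
    (hcomm : ∀ i j, P i * P j = P j * P i) :
    (adjoint (List.ofFn P).prod * (List.ofFn P).prod = 1 ∧
      (List.ofFn P).prod * adjoint (List.ofFn P).prod = 1) ↔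
    ∀ i, adjoint (P i) * P i = 1 ∧ P i * adjoint (P i) = 1 := by
  simp only [← star_eq_adjoint, ← Unitary.mem_iff]
  rw [list_prod_mem_unitary_iff (List.pairwise_ofFn.mpr fun i j _ ↦ hcomm i j)
    (List.forall_mem_ofFn_iff.mpr hnorm), List.forall_mem_ofFn_iff]
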